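/- Assume n ≥ 2, c_1 ≥ 0, c_3 ∈ ℝ, ζ ∈ ℝ and ω = 0, and for 1 ≤ i ≤ n define r_i : ℝ^m → ℝ by r_i(x) = (n/2) Σ_{l ∈ L_i} ⟨b_l, x⟩² + (c_1/2)‖x‖² − c_3 n x_1 if i = 1, and the same expression without the linear term if 2 ≤ i ≤ n. Let 0 ≤ k < m, let x ∈ F_k, let γ > 0, and let 1 ≤ i ≤ n. If i ≡ k+1 (mod n), then ∇r_i(x) ∈ F_{k+1} and the unique minimizer over ℝ^m of u ↦ r_i(u) + (1/(2γ))‖x − u‖² lies in F_{k+1}; if i ≢ k+1 (mod n), then ∇r_i(x) ∈ F_k and this unique minimizer lies in F_k. -/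

import Mathlib

open scoped RealInnerProductSpace BigOperators

/-- `F_k = span{e_1, …, e_k} ⊆ ℝ^m` (so `F_0 = {0}`). -/
def Fspan (m k : ℕ) : Submodule ℝ (EuclideanSpace ℝ (Fin m)) :=
  Submodule.span ℝ {v | ∃ j : Fin m, (j : ℕ) < k ∧ v = EuclideanSpace.single j 1}

/-!
Write `r_i(u) = ½⟪A u, u⟫ - ⟪d, u⟫` with `A = n ∑_{l ∈ L_i} b_l b_lᵀ + c₁ I` positive semidefinite
and `d` a multiple of `e_1`. Then `∇r_i(x) = A x - d`, and the proximal point is the solution of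
`(A + γ⁻¹ I) u = d + γ⁻¹ x`, where `A + γ⁻¹ I` is positive definite. Since `b_l` is supported on
the coordinates `l` and `l + 1`, it lies in `F_T` when `l < T` and in `F_Tᗮ` when `l > T`; so if
`T ∉ L_i` then `A` maps `F_T` into itself, hence (being injective) `A + γ⁻¹ I` maps `F_T` onto
itself, and both points lie in `F_T` as soon as `x, d ∈ F_T`. Finally `T = k + 1 ∉ L_i` when
`i ≡ k + 1 (mod n)` because `n ≥ 2`, and `T = k ∉ L_i` otherwise.
-/

open InnerProductSpace

theorem LinearMap.exists_mem_apply_eq_of_injective {K V : Type*} [DivisionRing K] [AddCommGroup V]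
    [Module K V] [FiniteDimensional K V] {A : V →ₗ[K] V} (hA : Function.Injective A)
    {F : Submodule K V} (hF : ∀ u ∈ F, A u ∈ F) {y : V} (hy : y ∈ F) : ∃ u ∈ F, A u = y := by
  have hinj : Function.Injective (A.restrict hF) := fun u v huv =>
    Subtype.ext (hA (congrArg Subtype.val huv))
  obtain ⟨u, hu⟩ := LinearMap.injective_iff_surjective.mp hinj ⟨y, hy⟩
  exact ⟨u, u.2, congrArg Subtype.val hu⟩

theorem isMinOn_univ_iff_of_forall_add_eq {E : Type*} [AddGroup E] {f q : E → ℝ} {u : E}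
    (hf : ∀ h, f (u + h) = f u + q h) (hq : ∀ h ≠ 0, 0 < q h) (w : E) :
    IsMinOn f Set.univ w ↔ w = u := by
  have hle : ∀ v, f u ≤ f v := fun v => by
    obtain ⟨h, rfl⟩ : ∃ h, v = u + h := ⟨-u + v, (add_neg_cancel_left u v).symm⟩
    rcases eq_or_ne h 0 with rfl | hh
    · simp
    · linarith [hf h, hq h hh]
  refine ⟨fun hw => ?_, fun hw => isMinOn_univ_iff.mpr fun v => hw ▸ hle v⟩
  by_contra hne
  have := hf (-u + w)
  rw [add_neg_cancel_left] at this
  linarith [hq (-u + w) (by rwa [Ne, neg_add_eq_zero, eq_comm]), isMinOn_univ_iff.mp hw u]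

section Quadratic

variable {E : Type*} [NormedAddCommGroup E] [InnerProductSpace ℝ E]

theorem hasGradientAt_half_inner_apply_self_sub_inner [CompleteSpace E] {A : E →L[ℝ] E}
    (hA : A.IsSymmetric) (d x : E) :
    HasGradientAt (fun u => (1 / 2) * ⟪A u, u⟫ - ⟪d, u⟫) (A x - d) x := by
  rw [hasGradientAt_iff_hasFDerivAt]
  refine ((((A.hasFDerivAt (x := x)).inner ℝ (hasFDerivAt_id x)).const_mul (1 / 2)).sub
    ((innerSL ℝ d).hasFDerivAt (x := x))).congr_fderiv ?_
  ext v
  have hAvx : ⟪A v, x⟫ = ⟪A x, v⟫ := by rw [real_inner_comm]; exact (hA x v).symm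
  simp only [one_div, id_eq, sub_apply, smul_apply, ContinuousLinearMap.comp_apply,
    ContinuousLinearMap.prod_apply, ContinuousLinearMap.id_apply, fderivInnerCLM_apply, hAvx,
    smul_eq_mul, coe_innerSL_apply, map_sub, toDual_apply_apply, sub_left_inj]
  ring

theorem half_inner_apply_self_sub_inner_add_norm_sq_add {A : E →L[ℝ] E} (hA : A.IsSymmetric)
    (c : ℝ) (d x u h : E) :
    (1 / 2) * ⟪A (u + h), u + h⟫ - ⟪d, u + h⟫ + c * ‖x - (u + h)‖ ^ 2
      = (1 / 2) * ⟪A u, u⟫ - ⟪d, u⟫ + c * ‖x - u‖ ^ 2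
        + ⟪A u - d + (2 * c) • (u - x), h⟫ + ((1 / 2) * ⟪A h, h⟫ + c * ‖h‖ ^ 2) := by
  rw [show x - (u + h) = (x - u) - h by abel, norm_sub_sq_real]
  have hAhu : ⟪A h, u⟫ = ⟪A u, h⟫ := by rw [real_inner_comm]; exact (hA u h).symm
  simp only [map_add, inner_add_left, inner_add_right, inner_sub_left, real_inner_smul_left,
    hAhu]
  ring

theorem ContinuousLinearMap.IsPositive.injective_add_smul_one {A : E →L[ℝ] E}
    (hA : A.IsPositive) {c : ℝ} (hc : 0 < c) :
    Function.Injective (A + c • (1 : E →L[ℝ] E)) := by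
  refine (injective_iff_map_eq_zero _).mpr fun h hAh => ?_
  have hinner : ⟪A h, h⟫ + c * ‖h‖ ^ 2 = 0 := by
    simpa [inner_add_left, real_inner_smul_left, real_inner_self_eq_norm_sq] using
      congrArg (⟪·, h⟫) hAh
  have : ‖h‖ ^ 2 = 0 := by nlinarith [hA.inner_nonneg_left h, sq_nonneg ‖h‖]
  simpa using this

theorem gradient_mem_and_prox_mem_of_mapsTo [FiniteDimensional ℝ E] {A : E →L[ℝ] E}
    (hA : A.IsPositive) {γ : ℝ} (hγ : 0 < γ) {F : Submodule ℝ E} (hF : ∀ u ∈ F, A u ∈ F)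
    {d x : E} (hd : d ∈ F) (hx : x ∈ F) :
    gradient (fun u => (1 / 2) * ⟪A u, u⟫ - ⟪d, u⟫) x ∈ F ∧
    ∃ u, IsMinOn (fun u => (1 / 2) * ⟪A u, u⟫ - ⟪d, u⟫ + (1 / (2 * γ)) * ‖x - u‖ ^ 2)
        Set.univ u ∧ u ∈ F ∧
      ∀ w, IsMinOn (fun u => (1 / 2) * ⟪A u, u⟫ - ⟪d, u⟫ + (1 / (2 * γ)) * ‖x - u‖ ^ 2)
        Set.univ w → w = u := by
  refine ⟨(hasGradientAt_half_inner_apply_self_sub_inner hA.isSymmetric d x).gradient ▸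
    F.sub_mem (hF x hx) hd, ?_⟩
  obtain ⟨u, huF, hBu⟩ := LinearMap.exists_mem_apply_eq_of_injective
    (A := ((A + γ⁻¹ • 1 : E →L[ℝ] E) : E →ₗ[ℝ] E)) (hA.injective_add_smul_one (inv_pos.mpr hγ))
    (F := F) (fun v hv => F.add_mem (hF v hv) (F.smul_mem _ hv))
    (y := d + γ⁻¹ • x) (F.add_mem hd (F.smul_mem _ hx))
  have hgrad : A u - d + (2 * (1 / (2 * γ))) • (u - x) = 0 := by
    have : A u + γ⁻¹ • u = d + γ⁻¹ • x := hBu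
    linear_combination (norm := module) this
  have hmin := isMinOn_univ_iff_of_forall_add_eq (u := u)
    (f := fun u => (1 / 2) * ⟪A u, u⟫ - ⟪d, u⟫ + (1 / (2 * γ)) * ‖x - u‖ ^ 2)
    (q := fun h => (1 / 2) * ⟪A h, h⟫ + (1 / (2 * γ)) * ‖h‖ ^ 2)
    (fun h => by rw [half_inner_apply_self_sub_inner_add_norm_sq_add hA.isSymmetric, hgrad,
      inner_zero_left, add_zero])
    (fun h hh => by
      have : 0 < ‖h‖ := norm_pos_iff.mpr hh
      have := hA.inner_nonneg_left h
      positivity)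
  exact ⟨u, (hmin u).mpr rfl, huF, fun w => (hmin w).mp⟩

end Quadratic

section Hessian

variable {E ι : Type*} [NormedAddCommGroup E] [InnerProductSpace ℝ E]

/-- The Hessian of `u ↦ (a / 2) * ∑ l ∈ S, ⟪v l, u⟫ ^ 2 + (c / 2) * ‖u‖ ^ 2`. -/
noncomputable def quadraticHessian (a c : ℝ) (S : Finset ι) (v : ι → E) : E →L[ℝ] E :=
  a • ∑ l ∈ S, rankOne ℝ (v l) (v l) + c • 1

theorem inner_quadraticHessian_apply_self (a c : ℝ) (S : Finset ι) (v : ι → E) (u : E) :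
    ⟪quadraticHessian a c S v u, u⟫ = a * ∑ l ∈ S, ⟪v l, u⟫ ^ 2 + c * ‖u‖ ^ 2 := by
  simp [quadraticHessian, inner_add_left, real_inner_smul_left, sum_inner, sq]

theorem isPositive_quadraticHessian {a c : ℝ} (ha : 0 ≤ a) (hc : 0 ≤ c) (S : Finset ι)
    (v : ι → E) : (quadraticHessian a c S v).IsPositive :=
  ((ContinuousLinearMap.isPositive_sum S fun l _ => isPositive_rankOne_self (v l)).smul_of_nonneg
    ha).add (ContinuousLinearMap.isPositive_one.smul_of_nonneg hc)

theorem rankOne_self_apply_mem {F : Submodule ℝ E} {v u : E} (hv : v ∈ F ∨ v ∈ Fᗮ)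
    (hu : u ∈ F) : rankOne ℝ v v u ∈ F := by
  rw [rankOne_apply]
  rcases hv with hv | hv
  · exact F.smul_mem _ hv
  · rw [Submodule.inner_left_of_mem_orthogonal hu hv, zero_smul]
    exact F.zero_mem

theorem quadraticHessian_apply_mem {F : Submodule ℝ E} {S : Finset ι} {v : ι → E}
    (hv : ∀ l ∈ S, v l ∈ F ∨ v l ∈ Fᗮ) (a c : ℝ) {u : E} (hu : u ∈ F) :
    quadraticHessian a c S v u ∈ F := by
  simp only [quadraticHessian, add_apply, smul_apply, sum_apply, one_apply_eq_self]
  exact F.add_mem (F.smul_mem _ (F.sum_mem fun l hl => rankOne_self_apply_mem (hv l hl) hu))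
    (F.smul_mem _ hu)

end Hessian

section Fspan

variable {m k : ℕ}

theorem Fspan_eq_span_basisFun :
    Fspan m k = Submodule.span ℝ
      ((EuclideanSpace.basisFun (Fin m) ℝ).toBasis '' {j | (j : ℕ) < k}) := by
  rw [Fspan]
  congr 1
  ext v
  simp only [Set.mem_ofPred_eq, Set.mem_image, OrthonormalBasis.coe_toBasis,
    EuclideanSpace.basisFun_apply]
  exact ⟨fun ⟨j, hj, hv⟩ => ⟨j, hj, hv.symm⟩, fun ⟨j, hj, hv⟩ => ⟨j, hj, hv.symm⟩⟩

theorem mem_Fspan_iff {x : EuclideanSpace ℝ (Fin m)} :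
    x ∈ Fspan m k ↔ ∀ j : Fin m, k ≤ j → x j = 0 := by
  rw [Fspan_eq_span_basisFun, Module.Basis.mem_span_image]
  simp [Set.subset_def, not_imp_comm]

theorem Fspan_mono {k k' : ℕ} (h : k ≤ k') : Fspan m k ≤ Fspan m k' :=
  Submodule.span_mono fun _ ⟨j, hj, hv⟩ => ⟨j, hj.trans_le h, hv⟩

theorem single_mem_Fspan {j : Fin m} (hj : (j : ℕ) < k) :
    EuclideanSpace.single j 1 ∈ Fspan m k :=
  Submodule.subset_span ⟨j, hj, rfl⟩

theorem mem_orthogonal_Fspan {v : EuclideanSpace ℝ (Fin m)}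
    (hv : ∀ j : Fin m, (j : ℕ) < k → v j = 0) : v ∈ (Fspan m k)ᗮ := by
  intro u hu
  rw [mem_Fspan_iff] at hu
  rw [PiLp.inner_apply]
  refine Finset.sum_eq_zero fun j _ => ?_
  rcases lt_or_ge (j : ℕ) k with h | h
  · simp [hv j h]
  · simp [hu j h]

/-- `Fin m` counts coordinates from `0`, so `hv` says that `v ∈ span {e_l, e_{l+1}}`. -/
theorem mem_Fspan_or_mem_orthogonal {l T : ℕ} {v : EuclideanSpace ℝ (Fin m)}
    (hv : ∀ j : Fin m, (j : ℕ) + 1 < l ∨ l < j → v j = 0) (hlT : l ≠ T) :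
    v ∈ Fspan m T ∨ v ∈ (Fspan m T)ᗮ := by
  rcases lt_or_gt_of_ne hlT with h | h
  · exact .inl (mem_Fspan_iff.mpr fun j hj => hv j (.inr (by omega)))
  · exact .inr (mem_orthogonal_Fspan fun j hj => hv j (.inl (by omega)))

theorem quadraticHessian_apply_mem_Fspan {b : ℕ → EuclideanSpace ℝ (Fin m)}
    {S : Finset ℕ} (hb : ∀ l ∈ S, ∀ j : Fin m, (j : ℕ) + 1 < l ∨ l < j → b l j = 0) {T : ℕ}
    (hTS : T ∉ S) (a c : ℝ) {u : EuclideanSpace ℝ (Fin m)} (hu : u ∈ Fspan m T) :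
    quadraticHessian a c S b u ∈ Fspan m T :=
  quadraticHessian_apply_mem (fun l hl => mem_Fspan_or_mem_orthogonal (hb l hl)
    fun hlT => hTS (by rwa [← hlT])) a c hu

end Fspan

theorem apply_eq_zero_of_lt_or_lt {m : ℕ} (hm : 0 < m) {ω ζ : ℝ}
    {b : ℕ → EuclideanSpace ℝ (Fin m)}
    (hb0 : b 0 = ω • EuclideanSpace.single (⟨0, by omega⟩ : Fin m) 1)
    (hbl : ∀ (l : ℕ) (_h1 : 1 ≤ l) (_h2 : l ≤ m - 1),
      b l = EuclideanSpace.single (⟨l - 1, by omega⟩ : Fin m) 1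
            - EuclideanSpace.single (⟨l, by omega⟩ : Fin m) 1)
    (hbm : b m = ζ • EuclideanSpace.single (⟨m - 1, by omega⟩ : Fin m) 1)
    {l : ℕ} (hl : l ≤ m) (j : Fin m) (hj : (j : ℕ) + 1 < l ∨ l < j) : b l j = 0 := by
  rcases Nat.eq_zero_or_pos l with rfl | hl0
  · have hj₀ : (j : ℕ) ≠ 0 := by omega
    simp [hb0, Fin.ext_iff, hj₀]
  rcases lt_or_eq_of_le hl with hlm | rfl
  · have hj₁ : (j : ℕ) ≠ l - 1 := by omega
    have hj₂ : (j : ℕ) ≠ l := by omega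
    simp [hbl l hl0 (by omega), Fin.ext_iff, hj₁, hj₂]
  · have hj₁ : (j : ℕ) ≠ l - 1 := by omega
    simp [hbm, Fin.ext_iff, hj₁]

theorem Nat.succ_mod_ne_sub_one_mod {n i k : ℕ} (hn : 2 ≤ n) (hi : 1 ≤ i)
    (h : i % n = (k + 1) % n) : (k + 1) % n ≠ (i - 1) % n := by
  intro h'
  have hdvd := (Nat.modEq_iff_dvd' (Nat.sub_le i 1)).mp (h'.symm.trans h.symm)
  rw [Nat.sub_sub_self hi] at hdvd
  have := Nat.le_of_dvd one_pos hdvd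
  omega

theorem Nat.mod_ne_sub_one_mod {n i k : ℕ} (hi : 1 ≤ i) (h : i % n ≠ (k + 1) % n) :
    k % n ≠ (i - 1) % n := fun h' => h <| by
  have := Nat.ModEq.add_right 1 h'
  rw [Nat.sub_add_cancel hi] at this
  exact this.symm

/-- Zero-respecting behaviour of gradient and proximal steps for the
convex decomposition `r_i` (with `ω = 0`): for `x ∈ F_k` and `1 ≤ i ≤ n`, if
`i ≡ k+1 (mod n)` then `∇r_i(x) ∈ F_{k+1}` and the unique minimizer of
`u ↦ r_i(u) + ‖x − u‖²/(2γ)` lies in `F_{k+1}`; otherwise both lie in `F_k`. -/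
theorem decomposition_quadratic_zero_chain
    (n m : ℕ) (hn : 2 ≤ n) (hm : 2 ≤ m)
    (ω ζ c₁ c₃ : ℝ) (hc₁ : 0 ≤ c₁)
    (b : ℕ → EuclideanSpace ℝ (Fin m))
    (hb0 : b 0 = ω • EuclideanSpace.single (⟨0, by omega⟩ : Fin m) 1)
    (hbl : ∀ (l : ℕ) (_h1 : 1 ≤ l) (_h2 : l ≤ m - 1),
      b l = EuclideanSpace.single (⟨l - 1, by omega⟩ : Fin m) 1
            - EuclideanSpace.single (⟨l, by omega⟩ : Fin m) 1)
    (hbm : b m = ζ • EuclideanSpace.single (⟨m - 1, by omega⟩ : Fin m) 1)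
    (r : ℕ → EuclideanSpace ℝ (Fin m) → ℝ)
    (hr : ∀ i : ℕ, 1 ≤ i → i ≤ n → ∀ x,
      r i x = (n / 2 : ℝ) *
          (∑ l ∈ (Finset.range (m + 1)).filter (fun l => l % n = (i - 1) % n),
            ⟪b l, x⟫ ^ 2)
        + (c₁ / 2) * ‖x‖ ^ 2
        - (if i = 1 then c₃ * n * x ⟨0, by omega⟩ else 0))
    (k : ℕ) (x : EuclideanSpace ℝ (Fin m)) (hx : x ∈ Fspan m k)
    (γ : ℝ) (hγ : 0 < γ) (i : ℕ) (hi1 : 1 ≤ i) (hin : i ≤ n) :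
    (i % n = (k + 1) % n →
      gradient (r i) x ∈ Fspan m (k + 1) ∧
      ∃ u, IsMinOn (fun u => r i u + (1 / (2 * γ)) * ‖x - u‖ ^ 2) Set.univ u ∧
        u ∈ Fspan m (k + 1) ∧
        ∀ w, IsMinOn (fun u => r i u + (1 / (2 * γ)) * ‖x - u‖ ^ 2) Set.univ w → w = u) ∧
    (¬ i % n = (k + 1) % n →
      gradient (r i) x ∈ Fspan m k ∧
      ∃ u, IsMinOn (fun u => r i u + (1 / (2 * γ)) * ‖x - u‖ ^ 2) Set.univ u ∧
        u ∈ Fspan m k ∧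
        ∀ w, IsMinOn (fun u => r i u + (1 / (2 * γ)) * ‖x - u‖ ^ 2) Set.univ w → w = u) := by
  set S := (Finset.range (m + 1)).filter (fun l => l % n = (i - 1) % n)
  set e₀ : EuclideanSpace ℝ (Fin m) := EuclideanSpace.single ⟨0, by omega⟩ 1
  set d := if i = 1 then (c₃ * n) • e₀ else 0
  set A := quadraticHessian (n : ℝ) c₁ S b
  have hr_eq : r i = fun u => (1 / 2) * ⟪A u, u⟫ - ⟪d, u⟫ := by
    funext u
    have hdu : ⟪d, u⟫ = if i = 1 then c₃ * n * u ⟨0, by omega⟩ else 0 := by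
      split_ifs with hi <;> simp [d, e₀, hi, real_inner_smul_left, EuclideanSpace.inner_single_left]
    rw [hr i hi1 hin u, inner_quadraticHessian_apply_self, hdu]
    ring
  have hA : A.IsPositive := isPositive_quadraticHessian (Nat.cast_nonneg n) hc₁ S b
  have hAF : ∀ T ∉ S, ∀ u ∈ Fspan m T, A u ∈ Fspan m T := fun T hTS _ =>
    quadraticHessian_apply_mem_Fspan (fun l hl => apply_eq_zero_of_lt_or_lt (by omega) hb0 hbl hbm
      (Nat.lt_succ_iff.mp (Finset.mem_range.mp (Finset.mem_filter.mp hl).1))) hTS _ _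
  have hd : ∀ T, (i = 1 → 0 < T) → d ∈ Fspan m T := fun T hT => by
    by_cases hi : i = 1
    · simpa [d, hi] using (Fspan m T).smul_mem _ (single_mem_Fspan (hT hi))
    · simp [d, hi]
  simp only [hr_eq]
  refine ⟨fun hik => gradient_mem_and_prox_mem_of_mapsTo hA hγ
      (hAF _ fun hS => Nat.succ_mod_ne_sub_one_mod hn hi1 hik (Finset.mem_filter.mp hS).2)
      (hd _ fun _ => k.succ_pos) (Fspan_mono k.le_succ hx),
    fun hik => gradient_mem_and_prox_mem_of_mapsTo hA hγ
      (hAF _ fun hS => Nat.mod_ne_sub_one_mod hi1 hik (Finset.mem_filter.mp hS).2)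
      (hd _ fun hi => Nat.pos_of_ne_zero fun hk => hik (by rw [hi, hk])) hx⟩
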